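/- arXiv:q-bio/0609046 — 3 statements merged into one kernel-verified Lean document; each statement's English description precedes it below -/
import Mathlib

section
/- Let T be a real-valued random variable on a probability space with T ≥ 0 almost surely and E[T²] < ∞. Then −E[T] ≤ log E[e^{−T}] ≤ −E[T] + (1/2)·Var(T)·e^{E[T]}. In particular, if additionally T ≤ τ almost surely for a constant τ ≥ 0, then 0 ≤ log E[e^{−T}] + E[T] ≤ (1/2)·τ²·e^{τ}. -/
/-!
Write `m = E[T]`. Jensen's inequality for `exp` gives `exp (-m) ≤ E[exp (-T)]`. For the upper
bound, Taylor's theorem with Lagrange remainder gives `exp u ≤ 1 + u + u²/2 · exp M` whenever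
`u ≤ M` and `0 ≤ M`. Applied to `u = m - T ≤ m` and multiplied by `exp (-m)`, it yields
`exp (-T) ≤ exp (-m) (1 + m - T) + (T - m)²/2`, whence
`E[exp (-T)] ≤ exp (-m) + Var(T)/2 = exp (-m) (1 + Var(T) exp m / 2) ≤ exp (-m + Var(T) exp m / 2)`.
If `0 ≤ T ≤ τ`, then `m ≤ τ` and Popoviciu's inequality gives `Var(T) ≤ τ²/4`.
-/

open MeasureTheory ProbabilityTheory Real Set

theorem Real.exists_exp_eq_one_add_add_exp_mul_sq_div_two {u : ℝ} (hu : u ≠ 0) :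
    ∃ ξ ∈ uIoo 0 u, exp u = 1 + u + exp ξ * u ^ 2 / 2 := by
  obtain ⟨ξ, hξ, h⟩ := taylor_mean_remainder_lagrange_iteratedDeriv (f := exp) (n := 1) hu.symm
    contDiff_exp.contDiffOn
  have hderiv : derivWithin exp (uIcc 0 u) 0 = 1 := by
    rw [(hasDerivAt_exp 0).hasDerivWithinAt.derivWithin
      (uniqueDiffOn_uIcc hu.symm 0 left_mem_uIcc), exp_zero]
  refine ⟨ξ, hξ, ?_⟩
  rw [← sub_eq_iff_eq_add']
  simpa [taylor_within_apply, iteratedDerivWithin_one, hderiv, iteratedDeriv_succ] using h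

theorem Real.exp_le_one_add_add_sq_div_two_mul_exp {u M : ℝ} (huM : u ≤ M) (hM : 0 ≤ M) :
    exp u ≤ 1 + u + u ^ 2 / 2 * exp M := by
  rcases eq_or_ne u 0 with rfl | hu
  · simp
  obtain ⟨ξ, hξ, h⟩ := exists_exp_eq_one_add_add_exp_mul_sq_div_two hu
  have hξM : ξ ≤ M := hξ.2.le.trans (max_le hM huM)
  calc exp u = 1 + u + u ^ 2 / 2 * exp ξ := by rw [h]; ring
    _ ≤ 1 + u + u ^ 2 / 2 * exp M := by gcongr

namespace ProbabilityTheory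

variable {Ω : Type*} [MeasurableSpace Ω] {μ : Measure Ω} {T : Ω → ℝ}

theorem integrable_exp_neg_of_nonneg [IsFiniteMeasure μ] (hT : AEStronglyMeasurable T μ)
    (hT_nonneg : ∀ᵐ ω ∂μ, 0 ≤ T ω) : Integrable (fun ω ↦ exp (-T ω)) μ := by
  refine (integrable_const 1).mono' (by fun_prop) ?_
  filter_upwards [hT_nonneg] with ω hω
  simpa [abs_of_pos (exp_pos _)] using hω

variable [IsProbabilityMeasure μ]

theorem integral_le_log_integral_exp {f : Ω → ℝ} (hf : Integrable f μ)
    (hexp : Integrable (fun ω ↦ exp (f ω)) μ) : ∫ ω, f ω ∂μ ≤ log (∫ ω, exp (f ω) ∂μ) := by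
  have jensen : exp (∫ ω, f ω ∂μ) ≤ ∫ ω, exp (f ω) ∂μ :=
    convexOn_exp.map_integral_le continuous_exp.continuousOn isClosed_univ
      (by simp) hf hexp
  exact (le_log_iff_exp_le ((exp_pos _).trans_le jensen)).2 jensen

theorem integral_exp_neg_le_exp_neg_integral_add_variance (hT : MemLp T 2 μ)
    (hT_nonneg : ∀ᵐ ω ∂μ, 0 ≤ T ω) :
    ∫ ω, exp (-T ω) ∂μ ≤ exp (-μ[T]) + variance T μ / 2 := by
  set m := μ[T]
  have hm : 0 ≤ m := integral_nonneg_of_ae hT_nonneg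
  have hT_int : Integrable T μ := hT.integrable one_le_two
  have hsq_int : Integrable (fun ω ↦ (T ω - m) ^ 2) μ := (hT.sub (memLp_const m)).integrable_sq
  have hexp_cancel : exp (-m) * exp m = 1 := by rw [← exp_add, neg_add_cancel, exp_zero]
  have hpointwise : ∀ᵐ ω ∂μ, exp (-T ω) ≤ exp (-m) * (1 + (m - T ω)) + (T ω - m) ^ 2 / 2 := by
    filter_upwards [hT_nonneg] with ω hω
    have h := exp_le_one_add_add_sq_div_two_mul_exp (show m - T ω ≤ m by linarith) hm
    calc exp (-T ω) = exp (-m) * exp (m - T ω) := by rw [← exp_add]; ring_nf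
      _ ≤ exp (-m) * (1 + (m - T ω) + (m - T ω) ^ 2 / 2 * exp m) := by gcongr
      _ = exp (-m) * (1 + (m - T ω)) + (T ω - m) ^ 2 / 2 := by
        linear_combination (m - T ω) ^ 2 / 2 * hexp_cancel
  have hdev_int : Integrable (fun ω ↦ m - T ω) μ := (integrable_const m).sub hT_int
  have hlin_int : Integrable (fun ω ↦ 1 + (m - T ω)) μ := (integrable_const 1).add hdev_int
  calc ∫ ω, exp (-T ω) ∂μ
      ≤ ∫ ω, exp (-m) * (1 + (m - T ω)) + (T ω - m) ^ 2 / 2 ∂μ :=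
        integral_mono_ae (integrable_exp_neg_of_nonneg hT.1 hT_nonneg)
          ((hlin_int.const_mul _).add (hsq_int.div_const 2)) hpointwise
    _ = exp (-m) + variance T μ / 2 := by
      rw [integral_add (hlin_int.const_mul _) (hsq_int.div_const 2), integral_const_mul,
        integral_add (integrable_const 1) hdev_int,
        integral_sub (integrable_const m) hT_int, integral_div,
        variance_eq_integral hT.1.aemeasurable]
      simp [m]

theorem log_integral_exp_neg_le (hT : MemLp T 2 μ) (hT_nonneg : ∀ᵐ ω ∂μ, 0 ≤ T ω) :
    log (∫ ω, exp (-T ω) ∂μ) ≤ -μ[T] + variance T μ / 2 * exp μ[T] := by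
  have hpos : 0 < ∫ ω, exp (-T ω) ∂μ :=
    integral_exp_pos (integrable_exp_neg_of_nonneg hT.1 hT_nonneg)
  rw [log_le_iff_le_exp hpos]
  calc ∫ ω, exp (-T ω) ∂μ ≤ exp (-μ[T]) + variance T μ / 2 :=
        integral_exp_neg_le_exp_neg_integral_add_variance hT hT_nonneg
    _ = exp (-μ[T]) * (1 + variance T μ / 2 * exp μ[T]) := by
        rw [exp_neg]; field_simp
    _ ≤ exp (-μ[T]) * exp (variance T μ / 2 * exp μ[T]) := by
        gcongr; linarith [add_one_le_exp (variance T μ / 2 * exp μ[T])]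
    _ = exp (-μ[T] + variance T μ / 2 * exp μ[T]) := (exp_add _ _).symm

end ProbabilityTheory

/-- Let `T` be a nonnegative (a.s.) random variable on a probability space with
`E[T²] < ∞`.  Then `−E[T] ≤ log E[e^{−T}] ≤ −E[T] + (1/2)·Var(T)·e^{E[T]}`, and if
moreover `T ≤ τ` a.s. for a constant `τ ≥ 0`, then
`0 ≤ log E[e^{−T}] + E[T] ≤ (1/2)·τ²·e^{τ}`. -/
theorem expectation_log_exp_bounds
    {Ω : Type*} [MeasurableSpace Ω] (μ : Measure Ω) [IsProbabilityMeasure μ]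
    (T : Ω → ℝ) (hTmeas : AEStronglyMeasurable T μ)
    (hTnn : ∀ᵐ ω ∂μ, 0 ≤ T ω)
    (hT2 : Integrable (fun ω => T ω ^ 2) μ) :
    (-(∫ ω, T ω ∂μ) ≤ Real.log (∫ ω, Real.exp (-T ω) ∂μ) ∧
      Real.log (∫ ω, Real.exp (-T ω) ∂μ) ≤
        -(∫ ω, T ω ∂μ) +
          1 / 2 * ProbabilityTheory.variance T μ * Real.exp (∫ ω, T ω ∂μ)) ∧
    ∀ τ : ℝ, 0 ≤ τ → (∀ᵐ ω ∂μ, T ω ≤ τ) →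
      0 ≤ Real.log (∫ ω, Real.exp (-T ω) ∂μ) + ∫ ω, T ω ∂μ ∧
        Real.log (∫ ω, Real.exp (-T ω) ∂μ) + ∫ ω, T ω ∂μ ≤
          1 / 2 * τ ^ 2 * Real.exp τ := by
  have hT : MemLp T 2 μ := (memLp_two_iff_integrable_sq hTmeas).2 hT2
  have hlower : -μ[T] ≤ log (∫ ω, exp (-T ω) ∂μ) := by
    simpa [integral_neg] using integral_le_log_integral_exp (hT.integrable one_le_two).neg
      (integrable_exp_neg_of_nonneg hTmeas hTnn)
  have hupper := log_integral_exp_neg_le hT hTnn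
  refine ⟨⟨hlower, by linarith⟩, fun τ hτ hTτ ↦ ⟨by linarith, ?_⟩⟩
  have hmean : μ[T] ≤ τ := by
    simpa using integral_mono_ae (hT.integrable one_le_two) (integrable_const τ) hTτ
  have hvar : variance T μ ≤ τ ^ 2 :=
    calc variance T μ ≤ ((τ - 0) / 2) ^ 2 :=
          variance_le_sq_of_bounded ((hTnn.and hTτ).mono fun _ h ↦ h) hTmeas.aemeasurable
      _ ≤ τ ^ 2 := by nlinarith
  calc log (∫ ω, exp (-T ω) ∂μ) + μ[T] ≤ variance T μ / 2 * exp μ[T] := by linarith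
    _ ≤ τ ^ 2 / 2 * exp τ := by gcongr
    _ = 1 / 2 * τ ^ 2 * exp τ := by ring
end

section
/- Let S be a selective cost with Lipschitz constant K. For all ρ, ρ′, η ∈ H⁺ with ρ(A) ≤ ρ′(A) for every Borel A, the following two bounds hold: sup_{m′ ∈ ℳ} |∫_ℳ K_ρ(m′,m″) η(dm″)| ≤ 2K·η(ℳ), and sup_{m′ ∈ ℳ} |∫_ℳ K_ρ(m′,m″) η(dm″) − ∫_ℳ K_{ρ′}(m′,m″) η(dm″)| ≤ 16K·(ρ′(ℳ) − ρ(ℳ))·η(ℳ). -/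
open MeasureTheory Set Filter
open scoped ENNReal NNReal

noncomputable section

namespace MSEW

/-- `LipLE dE f c` : the bounded-Lipschitz norm of `f`, namely
`sup_x |f x| + sup_{x ≠ y} |f x - f y| / dE x y`, is at most `c`;
phrased without suprema, relative to an abstract distance function `dE`. -/
def LipLE {E : Type*} (dE : E → E → ℝ) (f : E → ℝ) (c : ℝ) : Prop :=
  ∃ a b : ℝ, 0 ≤ a ∧ 0 ≤ b ∧ a + b ≤ c ∧ (∀ x, |f x| ≤ a) ∧
    ∀ x y, |f x - f y| ≤ b * dE x y

/-- Integral of `f : E → ℝ` against a finite integer-valued measure, represented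
as the multiset of its atoms (a genotype). -/
def gInt {E : Type*} (g : Multiset E) (f : E → ℝ) : ℝ := (g.map f).sum

/-- The mass `g(A)` that a genotype `g` assigns to a set `A`. -/
def gMass {E : Type*} (g : Multiset E) (A : Set E) : ℝ := gInt g (A.indicator 1)

/-- The σ-algebra on genotypes generated by the counting functionals
`g ↦ g(A)` for measurable `A`. -/
instance multisetMeasurableSpace {E : Type*} [MeasurableSpace E] :
    MeasurableSpace (Multiset E) :=
  MeasurableSpace.generateFrom
    { s | ∃ (A : Set E) (n : ℕ), MeasurableSet A ∧ s = { g : Multiset E | gMass g A = n } }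

/-- Wasserstein distance between two (finite) measures: the supremum of
differences of integrals of test functions of bounded-Lipschitz norm at most one. -/
def wasDist {E : Type*} [MeasurableSpace E] (dE : E → E → ℝ) (P Q : Measure E) : ℝ :=
  sSup { r | ∃ f : E → ℝ, LipLE dE f 1 ∧ r = |∫ x, f x ∂P - ∫ x, f x ∂Q| }

/-- Wasserstein norm of a finite signed measure, `sup { |∫ f dπ| : ‖f‖_Lip ≤ 1 }`. -/
def wasNorm {E : Type*} [MeasurableSpace E] (dE : E → E → ℝ) (π : SignedMeasure E) : ℝ :=
  wasDist dE π.toJordanDecomposition.posPart π.toJordanDecomposition.negPart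

/-- The Wasserstein metric on genotypes, `d(g,h) = ‖g - h‖_Was`. -/
def dG {M : Type*} [MetricSpace M] (g h : Multiset M) : ℝ :=
  sSup { r | ∃ f : M → ℝ, LipLE dist f 1 ∧ r = |gInt g f - gInt h f| }

/-- The measure on `E` associated with a genotype: the finite sum of Dirac masses. -/
def genMeasure {E : Type*} [MeasurableSpace E] (g : Multiset E) : Measure E :=
  (g.map fun x => Measure.dirac x).sum

/-- The intensity measure `μP` of a law `P` on genotypes: `μP(A) = ∫ g(A) dP(g)`. -/
def intensity {E : Type*} [MeasurableSpace E] (P : Measure (Multiset E)) : Measure E :=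
  P.bind genMeasure

/-- The law `Π_π` of a Poisson random measure with intensity `π`:
`Π_π[F] = e^{-π(univ)} ∑_k (1/k!) ∫ F(δ_{x₁}+⋯+δ_{x_k}) dπ^{⊗k}`. -/
def poissonLaw {M : Type*} [MeasurableSpace M] (π : Measure M) : Measure (Multiset M) :=
  ENNReal.ofReal (Real.exp (-(π Set.univ).toReal)) •
    Measure.sum fun k : ℕ =>
      ((Nat.factorial k : ℝ≥0∞))⁻¹ •
        Measure.map (fun x : Fin k → M => ∑ i, ({x i} : Multiset M))
          (Measure.pi fun _ : Fin k => π)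

/-- A selective cost with Lipschitz constant `K`: a Borel function
`S : 𝒢 → [0,∞)` with `S(0) = 0`, monotone under adding mutations, and
Lipschitz with constant `K` for the Wasserstein metric on genotypes. -/
structure IsSelectiveCost {M : Type*} [MetricSpace M] [MeasurableSpace M]
    (S : Multiset M → ℝ) (K : ℝ) : Prop where
  measurable : Measurable S
  nonneg : ∀ g, 0 ≤ S g
  map_zero : S 0 = 0
  mono : ∀ g h, S g ≤ S (g + h)
  lip : ∀ g h, |S g - S h| ≤ K * dG g h

/-- `F_π(x) = E[S(X^π + δ_x) - S(X^π)]`. -/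
def Fcost {M : Type*} [MeasurableSpace M] (S : Multiset M → ℝ) (π : Measure M) (x : M) : ℝ :=
  ∫ g, (S (g + {x}) - S g) ∂(poissonLaw π)

/-- The kernel `K_ρ(m,m') = E[S(X^ρ+δ_m+δ_{m'}) - S(X^ρ+δ_{m'}) - S(X^ρ+δ_m) + S(X^ρ)]`. -/
def Kker {M : Type*} [MeasurableSpace M] (S : Multiset M → ℝ) (ρ : Measure M)
    (m m' : M) : ℝ :=
  ∫ g, (S (g + {m} + {m'}) - S (g + {m'}) - S (g + {m}) + S g) ∂(poissonLaw ρ)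

/-- The operator `D`: `Dπ` is the measure with density `F_π` with respect to `π`. -/
def Dop {M : Type*} [MeasurableSpace M] (S : Multiset M → ℝ) (ρ : Measure M) : Measure M :=
  ρ.withDensity fun x => ENNReal.ofReal (Fcost S ρ x)

/-- Concavity of a selective cost. -/
def ConcaveCost {M : Type*} (S : Multiset M → ℝ) : Prop :=
  ∀ g h k : Multiset M, S (g + h + k) - S (g + h) ≤ S (g + k) - S g

/-- A solution of the mutation–selection dynamics
`ρ_t(A) = ρ₀(A) + t·ν(A) - ∫₀ᵗ (Dρ_s)(A) ds`: a `‖⋅‖_Was`-continuous curve of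
finite nonnegative measures satisfying the integral equation for `t ≥ 0`. -/
def IsSolution {M : Type*} [MetricSpace M] [MeasurableSpace M]
    (S : Multiset M → ℝ) (ν ρ₀ : Measure M) (ρ : ℝ → Measure M) : Prop :=
  (∀ t, IsFiniteMeasure (ρ t)) ∧ ρ 0 = ρ₀ ∧
  (∀ t, 0 ≤ t → ∀ ε > (0:ℝ), ∃ δ > (0:ℝ), ∀ s, 0 ≤ s → |s - t| < δ →
     wasDist dist (ρ s) (ρ t) < ε) ∧
  ∀ t, 0 ≤ t → ∀ A : Set M, MeasurableSet A →
    ((ρ t) A).toReal = (ρ₀ A).toReal + t * (ν A).toReal -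
      ∫ s in (0:ℝ)..t, ((Dop S (ρ s)) A).toReal

/-- The mutation operator `𝔐_n`: add an independent Poisson cloud of new
mutations with intensity `ν/n`. -/
def mutOp {M : Type*} [MeasurableSpace M] (ν : Measure M) (n : ℕ)
    (P : Measure (Multiset M)) : Measure (Multiset M) :=
  Measure.map (fun p : Multiset M × Multiset M => p.1 + p.2)
    (P.prod (poissonLaw (((n : ℝ≥0∞))⁻¹ • ν)))

/-- The selection operator `𝔖_n`: reweight by `e^{-S/n}` and renormalize. -/
def selOp {M : Type*} [MeasurableSpace M] (S : Multiset M → ℝ) (n : ℕ)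
    (P : Measure (Multiset M)) : Measure (Multiset M) :=
  (∫⁻ g, ENNReal.ofReal (Real.exp (-S g / (n : ℝ))) ∂P)⁻¹ •
    P.withDensity fun g => ENNReal.ofReal (Real.exp (-S g / (n : ℝ)))

/-- The complete Poissonization operator `𝔓P = Π_{μP}`. -/
def poisOp {M : Type*} [MeasurableSpace M] (P : Measure (Multiset M)) :
    Measure (Multiset M) :=
  poissonLaw (intensity P)

/-- Restriction `g_B` of a genotype to a set: `g_B(A) = g(A ∩ B)`. -/
def restrictMS {M : Type*} (g : Multiset M) (B : Set M) : Multiset M :=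
  @Multiset.filter M (· ∈ B) (Classical.decPred _) g

/-- The random segregating set determined by a jointly measurable indicator. -/
def segSet {Ω M : Type*} (χ : Ω × M → Bool) (ω : Ω) : Set M :=
  { x | χ (ω, x) = true }

/-- The recombination operator `ℛ`. -/
def recOp {M Ω : Type*} [MeasurableSpace M] [MeasurableSpace Ω]
    (Pr : Measure Ω) (R : Ω → Set M) (P : Measure (Multiset M)) : Measure (Multiset M) :=
  Measure.map (fun q : Ω × Multiset M × Multiset M =>
      restrictMS q.2.1 (R q.1) + restrictMS q.2.2 ((R q.1)ᶜ))
    (Pr.prod (P.prod P))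

/-- Symmetry of a recombination mechanism: the segregating set and its
complement are identically distributed as random sets. -/
def IsSymmetricMech {M Ω : Type*} [MeasurableSpace M] [MeasurableSpace Ω]
    (Pr : Measure Ω) (R : Ω → Set M) : Prop :=
  ∀ lam : Measure M, IsFiniteMeasure lam → ∀ (p : ℕ) (B : Fin p → Set M),
    (∀ i, MeasurableSet (B i)) →
    Measure.map (fun ω => fun i => (lam (B i ∩ R ω)).toReal) Pr =
    Measure.map (fun ω => fun i => (lam (B i ∩ (R ω)ᶜ)).toReal) Pr

/-- `(ℛ, λ)` is shattering with constant `α`: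
`λ(A)³ ≤ 2α·E[λ(A ∩ R)·λ(A ∩ Rᶜ)]` for every Borel `A`. -/
def IsShattering {M Ω : Type*} [MeasurableSpace M] [MeasurableSpace Ω]
    (Pr : Measure Ω) (R : Ω → Set M) (lam : Measure M) (α : ℝ) : Prop :=
  ∀ A : Set M, MeasurableSet A →
    (lam A).toReal ^ 3 ≤
      2 * α * ∫ ω, (lam (A ∩ R ω)).toReal * (lam (A ∩ (R ω)ᶜ)).toReal ∂Pr

/-!
Both bounds come from pointwise bounds on the integrands. Monotonicity and the Lipschitz bound
put every increment `S(g + δₓ) - S(g)` in `[0, K]`, so the second difference defining `K_ρ` is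
at most `K` in absolute value. For `ρ ≤ ρ'` every term of the Poisson series of `ρ'` dominates
the corresponding term for `ρ`, hence `Π_ρ' ≥ e^{-(ρ'(M) - ρ(M))} Π_ρ`; two probability measures
related in this way are within `1 - e^{-(ρ'(M) - ρ(M))} ≤ ρ'(M) - ρ(M)` in total variation.
-/

section MultisetMeasurable

variable {E : Type*}

lemma gMass_add (g h : Multiset E) (A : Set E) : gMass (g + h) A = gMass g A + gMass h A := by
  simp [gMass, gInt]

lemma gMass_singleton (x : E) (A : Set E) : gMass ({x} : Multiset E) A = A.indicator 1 x := by
  simp [gMass, gInt]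

lemma exists_gMass_eq_natCast (g : Multiset E) (A : Set E) : ∃ n : ℕ, gMass g A = n := by
  classical
  induction g using Multiset.induction_on with
  | empty => exact ⟨0, by simp [gMass, gInt]⟩
  | cons x g ih =>
    obtain ⟨n, hn⟩ := ih
    rw [← Multiset.singleton_add, gMass_add, gMass_singleton, hn]
    by_cases hx : x ∈ A
    · exact ⟨n + 1, by simp [hx, add_comm]⟩
    · exact ⟨n, by simp [hx]⟩

lemma abs_gInt_le_mul_card {f : E → ℝ} {a : ℝ} (hf : ∀ x, |f x| ≤ a) (g : Multiset E) :
    |gInt g f| ≤ a * Multiset.card g := by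
  induction g using Multiset.induction_on with
  | empty => simp [gInt]
  | cons x g ih =>
    simp only [gInt, Multiset.map_cons, Multiset.sum_cons, Multiset.card_cons] at ih ⊢
    push_cast
    linarith [abs_add_le (f x) (g.map f).sum, hf x]

variable [MeasurableSpace E]

lemma measurable_gMass {A : Set E} (hA : MeasurableSet A) :
    Measurable fun g : Multiset E => gMass g A := by
  intro B _
  have hpre : (fun g : Multiset E => gMass g A) ⁻¹' B =
      ⋃ n ∈ {n : ℕ | (n : ℝ) ∈ B}, {g : Multiset E | gMass g A = n} := by
    ext g
    obtain ⟨n, hn⟩ := exists_gMass_eq_natCast g A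
    simp only [Set.mem_preimage, Set.mem_iUnion, Set.mem_ofPred_eq, exists_prop]
    exact ⟨fun hg => ⟨n, hn ▸ hg, hn⟩, fun ⟨k, hk, hgk⟩ => hgk ▸ hk⟩
  rw [hpre]
  exact .biUnion (Set.to_countable _) fun n _ =>
    MeasurableSpace.measurableSet_generateFrom ⟨A, n, hA, rfl⟩

lemma measurable_of_forall_measurable_gMass {X : Type*} [MeasurableSpace X] {T : X → Multiset E}
    (h : ∀ A : Set E, MeasurableSet A → Measurable fun x => gMass (T x) A) : Measurable T := by
  refine measurable_generateFrom ?_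
  rintro s ⟨A, n, hA, rfl⟩
  exact h A hA (measurableSet_singleton (n : ℝ))

instance : MeasurableAdd₂ (Multiset E) where
  measurable_add := measurable_of_forall_measurable_gMass fun A hA => by
    simp only [gMass_add]
    exact ((measurable_gMass hA).comp measurable_fst).add ((measurable_gMass hA).comp measurable_snd)

@[fun_prop]
lemma measurable_multiset_singleton : Measurable fun x : E => ({x} : Multiset E) :=
  measurable_of_forall_measurable_gMass fun A hA => by
    simp only [gMass_singleton]
    exact measurable_const.indicator hA

end MultisetMeasurable

section SelectiveCost

variable {M : Type*} [MetricSpace M]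

lemma dG_add_left_le (g h : Multiset M) : dG (g + h) g ≤ Multiset.card h := by
  refine Real.sSup_le ?_ (Nat.cast_nonneg _)
  rintro r ⟨f, ⟨a, b, -, hb, hab, hfa, -⟩, rfl⟩
  have hgInt : gInt (g + h) f - gInt g f = gInt h f := by simp [gInt]
  rw [hgInt]
  exact (abs_gInt_le_mul_card hfa h).trans (by nlinarith [(Multiset.card h).cast_nonneg (α := ℝ)])

lemma one_le_dG_singleton_zero (m : M) : 1 ≤ dG ({m} : Multiset M) 0 := by
  refine le_csSup ⟨1, ?_⟩ ⟨fun _ => 1, ⟨1, 0, zero_le_one, le_rfl, by norm_num, by simp, by simp⟩,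
    by simp [gInt]⟩
  rintro r ⟨f, ⟨a, b, -, hb, hab, hfa, -⟩, rfl⟩
  simpa [gInt] using (hfa m).trans (by linarith : a ≤ 1)

variable [MeasurableSpace M] {S : Multiset M → ℝ} {K : ℝ}

lemma IsSelectiveCost.lipschitz_const_nonneg (hS : IsSelectiveCost S K) (m : M) : 0 ≤ K := by
  have h := (abs_nonneg _).trans (hS.lip {m} 0)
  exact nonneg_of_mul_nonneg_left h (zero_lt_one.trans_le (one_le_dG_singleton_zero m))

lemma IsSelectiveCost.sub_add_singleton_mem_Icc (hS : IsSelectiveCost S K) (g : Multiset M)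
    (x : M) : S (g + {x}) - S g ∈ Set.Icc 0 K := by
  have hlip : S (g + {x}) - S g ≤ K * dG (g + {x}) g := (le_abs_self _).trans (hS.lip _ _)
  have hdG : dG (g + {x}) g ≤ 1 := by simpa using dG_add_left_le g {x}
  exact ⟨sub_nonneg.2 (hS.mono g {x}),
    hlip.trans (mul_le_of_le_one_right (hS.lipschitz_const_nonneg x) hdG)⟩

lemma IsSelectiveCost.abs_secondDiff_le (hS : IsSelectiveCost S K) (g : Multiset M) (m m' : M) :
    |S (g + {m} + {m'}) - S (g + {m'}) - S (g + {m}) + S g| ≤ K := by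
  obtain ⟨h₁, h₂⟩ := hS.sub_add_singleton_mem_Icc (g + {m}) m'
  obtain ⟨h₃, h₄⟩ := hS.sub_add_singleton_mem_Icc g m'
  rw [abs_le]
  constructor <;> linarith

end SelectiveCost

section Comparison

variable {α : Type*} [MeasurableSpace α]

/-- `Q = c • P + ν` with `ν` of mass `1 - c`, so `P` and `Q` are `1 - c` apart in total
variation. -/
lemma abs_integral_sub_le_of_smul_le {P Q : Measure α} [IsProbabilityMeasure P]
    [IsProbabilityMeasure Q] {c : ℝ≥0} (hPQ : c • P ≤ Q) {Φ : α → ℝ}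
    (hΦm : StronglyMeasurable Φ) {C : ℝ} (hΦ : ∀ x, |Φ x| ≤ C) :
    |∫ x, Φ x ∂P - ∫ x, Φ x ∂Q| ≤ 2 * C * (1 - c) := by
  set ν := Q - c • P
  have hQ : Q = c • P + ν := by rw [add_comm]; exact (Measure.sub_add_cancel_of_le hPQ).symm
  have hν : ν.real Set.univ = 1 - c := by
    have h := congrArg (fun μ : Measure α => μ.real Set.univ) hQ
    rw [measureReal_add_apply, measureReal_nnreal_smul_apply, probReal_univ, probReal_univ] at h
    linarith
  have hbd : ∀ μ : Measure α, ∀ᵐ x ∂μ, ‖Φ x‖ ≤ C := fun μ => ae_of_all _ hΦ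
  have hint : ∀ μ : Measure α, IsFiniteMeasure μ → Integrable Φ μ := fun μ _ =>
    .of_bound hΦm.aestronglyMeasurable C (hbd μ)
  have hP := norm_integral_le_of_norm_le_const (hbd P)
  have hν' := norm_integral_le_of_norm_le_const (hbd ν)
  rw [probReal_univ, mul_one] at hP
  rw [hν] at hν'
  rw [hQ, integral_add_measure ((hint P inferInstance).smul_measure_nnreal) (hint ν inferInstance),
    integral_smul_nnreal_measure, NNReal.smul_def, smul_eq_mul]
  have hc : (c : ℝ) ≤ 1 := by linarith [hν ▸ measureReal_nonneg (μ := ν) (s := Set.univ)]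
  rw [Real.norm_eq_abs] at hP hν'
  calc |∫ x, Φ x ∂P - ((c : ℝ) * ∫ x, Φ x ∂P + ∫ x, Φ x ∂ν)|
      = |(1 - c) * ∫ x, Φ x ∂P - ∫ x, Φ x ∂ν| := by ring_nf
    _ ≤ (1 - c) * |∫ x, Φ x ∂P| + |∫ x, Φ x ∂ν| := by
      refine (abs_sub ((1 - c) * ∫ x, Φ x ∂P) _).trans_eq ?_
      rw [abs_mul, abs_of_nonneg (sub_nonneg.2 hc)]
    _ ≤ 2 * C * (1 - c) := by nlinarith

end Comparison

lemma Measure.pi_fin_mono {n : ℕ} {α : Fin n → Type*} [∀ i, MeasurableSpace (α i)]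
    {μ ν : ∀ i, Measure (α i)} [∀ i, SigmaFinite (μ i)] [∀ i, SigmaFinite (ν i)]
    (h : ∀ i, μ i ≤ ν i) : Measure.pi μ ≤ Measure.pi ν := by
  induction n with
  | zero => rw [Measure.pi_of_empty μ, Measure.pi_of_empty ν]
  | succ n ih =>
    rw [← (measurePreserving_piFinSuccAbove μ 0).symm.map_eq,
      ← (measurePreserving_piFinSuccAbove ν 0).symm.map_eq]
    exact Measure.map_mono (Measure.prod_mono (h 0) (ih fun i => h _))
      (MeasurableEquiv.measurable _)

section Poisson

variable {M : Type*} [MeasurableSpace M]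

def poissonSeries (π : Measure M) : Measure (Multiset M) :=
  Measure.sum fun k : ℕ =>
    ((Nat.factorial k : ℝ≥0∞))⁻¹ •
      Measure.map (fun x : Fin k → M => ∑ i, ({x i} : Multiset M)) (Measure.pi fun _ : Fin k => π)

lemma poissonLaw_eq_smul_poissonSeries (π : Measure M) :
    poissonLaw π = ENNReal.ofReal (Real.exp (-(π Set.univ).toReal)) • poissonSeries π :=
  rfl

lemma measurable_sum_singleton (k : ℕ) :
    Measurable fun x : Fin k → M => ∑ i, ({x i} : Multiset M) :=
  Finset.measurable_sum _ fun i _ => measurable_multiset_singleton.comp (measurable_pi_apply i)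

lemma poissonSeries_apply_univ (π : Measure M) [IsFiniteMeasure π] :
    poissonSeries π Set.univ = ENNReal.ofReal (Real.exp (π Set.univ).toReal) := by
  have hterm (k : ℕ) : ((Nat.factorial k : ℝ≥0∞))⁻¹ * π Set.univ ^ k =
      ENNReal.ofReal ((π Set.univ).toReal ^ k / Nat.factorial k) := by
    rw [ENNReal.ofReal_div_of_pos (by positivity), ENNReal.ofReal_pow ENNReal.toReal_nonneg,
      ENNReal.ofReal_toReal (measure_ne_top π _), ENNReal.ofReal_natCast, ENNReal.div_eq_inv_mul]
  simp only [poissonSeries, Measure.sum_apply _ MeasurableSet.univ, Measure.smul_apply,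
    Measure.map_apply (measurable_sum_singleton _) MeasurableSet.univ, Set.preimage_univ,
    Measure.pi_univ, Finset.prod_const, Finset.card_univ, Fintype.card_fin, smul_eq_mul, hterm]
  rw [← ENNReal.ofReal_tsum_of_nonneg (fun k => by positivity)
    (Real.summable_pow_div_factorial _), Real.exp_eq_exp_ℝ, NormedSpace.exp_eq_tsum_div]

instance (π : Measure M) [IsFiniteMeasure π] : IsProbabilityMeasure (poissonLaw π) := by
  constructor
  rw [poissonLaw_eq_smul_poissonSeries, Measure.smul_apply, poissonSeries_apply_univ, smul_eq_mul,
    ← ENNReal.ofReal_mul (Real.exp_nonneg _), ← Real.exp_add, neg_add_cancel, Real.exp_zero,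
    ENNReal.ofReal_one]

lemma poissonSeries_mono {ρ ρ' : Measure M} [IsFiniteMeasure ρ] [IsFiniteMeasure ρ']
    (h : ρ ≤ ρ') : poissonSeries ρ ≤ poissonSeries ρ' := by
  refine Measure.le_iff.2 fun s hs => ?_
  simp only [poissonSeries, Measure.sum_apply _ hs]
  refine ENNReal.tsum_le_tsum fun k => ?_
  gcongr
  · exact measurable_sum_singleton k
  · exact Measure.pi_fin_mono fun _ => h

lemma smul_poissonLaw_le {ρ ρ' : Measure M} [IsFiniteMeasure ρ] [IsFiniteMeasure ρ']
    (h : ρ ≤ ρ') :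
    (Real.exp (-((ρ' Set.univ).toReal - (ρ Set.univ).toReal))).toNNReal • poissonLaw ρ ≤
      poissonLaw ρ' := by
  rw [poissonLaw_eq_smul_poissonSeries, poissonLaw_eq_smul_poissonSeries, ENNReal.smul_def,
    smul_smul]
  change (ENNReal.ofReal _ * _) • _ ≤ _
  rw [← ENNReal.ofReal_mul (Real.exp_nonneg _), ← Real.exp_add, sub_eq_add_neg, neg_add, neg_neg,
    add_neg_cancel_right]
  gcongr
  exact poissonSeries_mono h

lemma abs_integral_poissonLaw_sub_le {ρ ρ' : Measure M} [IsFiniteMeasure ρ] [IsFiniteMeasure ρ']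
    (h : ρ ≤ ρ') {Φ : Multiset M → ℝ} (hΦm : Measurable Φ) {C : ℝ} (hΦ : ∀ g, |Φ g| ≤ C) :
    |∫ g, Φ g ∂poissonLaw ρ - ∫ g, Φ g ∂poissonLaw ρ'| ≤
      2 * C * ((ρ' Set.univ).toReal - (ρ Set.univ).toReal) := by
  set s := (ρ' Set.univ).toReal - (ρ Set.univ).toReal
  have hC : 0 ≤ C := (abs_nonneg _).trans (hΦ 0)
  refine (abs_integral_sub_le_of_smul_le (smul_poissonLaw_le h) hΦm.stronglyMeasurable hΦ).trans ?_
  rw [Real.coe_toNNReal _ (Real.exp_nonneg _)]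
  have hexp : 1 - s ≤ Real.exp (-s) := by linarith [Real.add_one_le_exp (-s)]
  gcongr
  linarith

end Poisson

section Kernel

variable {M : Type*} [MetricSpace M] [MeasurableSpace M] {S : Multiset M → ℝ} {K : ℝ}

lemma IsSelectiveCost.measurable_secondDiff (hS : IsSelectiveCost S K) (m : M) :
    Measurable fun p : M × Multiset M =>
      S (p.2 + {m} + {p.1}) - S (p.2 + {p.1}) - S (p.2 + {m}) + S p.2 := by
  have h := hS.measurable
  fun_prop

lemma IsSelectiveCost.abs_Kker_le (hS : IsSelectiveCost S K) (π : Measure M) [IsFiniteMeasure π]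
    (m m' : M) : |Kker S π m m'| ≤ K := by
  simpa [Kker] using norm_integral_le_of_norm_le_const
    (μ := poissonLaw π)
    (ae_of_all _ fun g => (Real.norm_eq_abs _).trans_le (hS.abs_secondDiff_le g m m'))

lemma IsSelectiveCost.integrable_Kker (hS : IsSelectiveCost S K) (π η : Measure M)
    [IsFiniteMeasure π] [IsFiniteMeasure η] (m : M) : Integrable (Kker S π m) η :=
  .of_bound (hS.measurable_secondDiff m).stronglyMeasurable.integral_prod_right'.aestronglyMeasurable
    K (ae_of_all _ fun m' => hS.abs_Kker_le π m m')

lemma IsSelectiveCost.abs_Kker_sub_le (hS : IsSelectiveCost S K) {ρ ρ' : Measure M}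
    [IsFiniteMeasure ρ] [IsFiniteMeasure ρ'] (h : ρ ≤ ρ') (m m' : M) :
    |Kker S ρ m m' - Kker S ρ' m m'| ≤ 2 * K * ((ρ' Set.univ).toReal - (ρ Set.univ).toReal) :=
  abs_integral_poissonLaw_sub_le h
    ((hS.measurable_secondDiff m).comp (measurable_const.prodMk measurable_id))
    (fun g => hS.abs_secondDiff_le g m m')

end Kernel

variable {M : Type*} [MetricSpace M] [CompleteSpace M] [TopologicalSpace.SeparableSpace M]
  [MeasurableSpace M] [BorelSpace M]

theorem Kker_int_bounds (S : Multiset M → ℝ) (K : ℝ) (hS : IsSelectiveCost S K)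
    (ρ ρ' η : Measure M) [IsFiniteMeasure ρ] [IsFiniteMeasure ρ'] [IsFiniteMeasure η]
    (hle : ∀ A : Set M, MeasurableSet A → ρ A ≤ ρ' A) :
    (∀ m : M, |∫ m'', Kker S ρ m m'' ∂η| ≤ 2 * K * (η Set.univ).toReal) ∧
    (∀ m : M, |(∫ m'', Kker S ρ m m'' ∂η) - ∫ m'', Kker S ρ' m m'' ∂η| ≤
        16 * K * ((ρ' Set.univ).toReal - (ρ Set.univ).toReal) * (η Set.univ).toReal) := by
  have hρ : ρ ≤ ρ' := Measure.le_iff.2 hle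
  have hs : 0 ≤ (ρ' Set.univ).toReal - (ρ Set.univ).toReal :=
    sub_nonneg.2 (ENNReal.toReal_mono (measure_ne_top _ _) (hρ Set.univ))
  have hη : 0 ≤ (η Set.univ).toReal := ENNReal.toReal_nonneg
  refine ⟨fun m => ?_, fun m => ?_⟩ <;> have hK := hS.lipschitz_const_nonneg m
  · calc |∫ m'', Kker S ρ m m'' ∂η| ≤ K * (η Set.univ).toReal := by
          simpa [measureReal_def] using norm_integral_le_of_norm_le_const
            (ae_of_all η fun m'' => (Real.norm_eq_abs _).trans_le (hS.abs_Kker_le ρ m m''))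
      _ ≤ 2 * K * (η Set.univ).toReal := by nlinarith
  · rw [← integral_sub (hS.integrable_Kker ρ η m) (hS.integrable_Kker ρ' η m)]
    calc |∫ m'', (Kker S ρ m m'' - Kker S ρ' m m'') ∂η|
        ≤ 2 * K * ((ρ' Set.univ).toReal - (ρ Set.univ).toReal) * (η Set.univ).toReal := by
          simpa [measureReal_def] using norm_integral_le_of_norm_le_const
            (ae_of_all η fun m'' => (Real.norm_eq_abs _).trans_le (hS.abs_Kker_sub_le hρ m m''))
      _ ≤ 16 * K * ((ρ' Set.univ).toReal - (ρ Set.univ).toReal) * (η Set.univ).toReal := by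
          gcongr; linarith

end MSEW
end
end

section
/- Fix ν ∈ H⁺ and let S be a selective cost with Lipschitz constant K that is bounded and concave. Suppose there are a constant ξ > 0 and a Borel function τ : ℳ → [0,∞) such that S(g + δ_{m′}) − S(g) ≤ ξ·(1 − e^{−τ(m′)})·exp(−∫_ℳ τ dg) for all g ∈ 𝒢 and m′ ∈ ℳ. If ν(ℳ) > e^{−1}·ξ, then the unique solution ρ of the mutation–selection dynamics with initial condition ρ₀ = 0 satisfies lim_{t→∞} ρ_t(ℳ) = ∞. -/
/-!
Write `u(π) = ∫ (1 - e^{-τ}) dπ`. The hypothesis bounds the cost of a new mutation at `x` by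
`ξ (1 - e^{-τ x}) e^{-∫ τ dX^π}`, and the Laplace functional of the Poisson measure gives
`E[e^{-∫ τ dX^π}] = e^{-u(π)}`. Integrating against `π`, the total selection rate is
`(Dπ)(ℳ) ≤ ξ u(π) e^{-u(π)} ≤ ξ / e` whatever `π` is, so along the dynamics the total mass grows
at least at the rate `ν(ℳ) - ξ / e > 0`.
-/

open MeasureTheory Set Filter
open scoped ENNReal NNReal

noncomputable section

namespace MSEW

variable {M : Type*} [MetricSpace M] [CompleteSpace M] [TopologicalSpace.SeparableSpace M]
  [MeasurableSpace M] [BorelSpace M]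

lemma gInt_sum_singleton {E ι : Type*} (s : Finset ι) (x : ι → E) (f : E → ℝ) :
    gInt (∑ i ∈ s, ({x i} : Multiset E)) f = ∑ i ∈ s, f (x i) := by
  classical
  induction s using Finset.induction_on with
  | empty => simp [gInt]
  | insert a s ha ih => simp_all [gInt, Finset.sum_insert]

lemma integral_le_toReal_lintegral_ofReal {α : Type*} [MeasurableSpace α] {μ : Measure α}
    (f : α → ℝ) : ∫ a, f a ∂μ ≤ (∫⁻ a, ENNReal.ofReal (f a) ∂μ).toReal := by
  by_cases hf : Integrable f μ
  · rw [integral_eq_lintegral_pos_part_sub_lintegral_neg_part hf]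
    exact sub_le_self _ ENNReal.toReal_nonneg
  · rw [integral_undef hf]
    exact ENNReal.toReal_nonneg

lemma tsum_inv_factorial_mul_ofReal_pow {a : ℝ} (ha : 0 ≤ a) :
    ∑' k : ℕ, ((Nat.factorial k : ℝ≥0∞))⁻¹ * ENNReal.ofReal (a ^ k) =
      ENNReal.ofReal (Real.exp a) := by
  have hterm (k : ℕ) : ((Nat.factorial k : ℝ≥0∞))⁻¹ * ENNReal.ofReal (a ^ k) =
      ENNReal.ofReal (a ^ k / Nat.factorial k) := by
    rw [div_eq_inv_mul, ENNReal.ofReal_mul (by positivity), ENNReal.ofReal_inv_of_pos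
      (by positivity), ENNReal.ofReal_natCast]
  simp_rw [hterm]
  rw [← ENNReal.ofReal_tsum_of_nonneg (fun k => by positivity) (Real.summable_pow_div_factorial a),
    (NormedSpace.expSeries_div_hasSum_exp a).tsum_eq, Real.exp_eq_exp_ℝ]

section PoissonLaw

variable {E : Type*} [MeasurableSpace E] {π : Measure E} [IsFiniteMeasure π]

lemma lintegral_ofReal_prod_pi {φ : E → ℝ} (hφ : Integrable φ π) (hφ0 : 0 ≤ φ) (k : ℕ) :
    ∫⁻ x : Fin k → E, ENNReal.ofReal (∏ i, φ (x i)) ∂Measure.pi (fun _ => π) =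
      ENNReal.ofReal ((∫ y, φ y ∂π) ^ k) := by
  rw [← ofReal_integral_eq_lintegral_ofReal (Integrable.fintype_prod fun _ => hφ)
    (.of_forall fun x => Finset.prod_nonneg fun i _ => hφ0 (x i)),
    integral_fintype_prod_eq_pow, Fintype.card_fin]

lemma lintegral_poissonLaw_le_of_le_prod {f : Multiset E → ℝ≥0∞} {φ : E → ℝ}
    (hφ : Integrable φ π) (hφ0 : 0 ≤ φ)
    (hf : ∀ (k : ℕ) (x : Fin k → E), f (∑ i, {x i}) ≤ ENNReal.ofReal (∏ i, φ (x i))) :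
    ∫⁻ g, f g ∂poissonLaw π ≤ ENNReal.ofReal (Real.exp (∫ y, φ y ∂π - (π univ).toReal)) := by
  have hterm (k : ℕ) : ∫⁻ g, f g ∂Measure.map (fun x : Fin k → E => ∑ i, ({x i} : Multiset E))
      (Measure.pi fun _ => π) ≤ ENNReal.ofReal ((∫ y, φ y ∂π) ^ k) :=
    calc _ ≤ ∫⁻ x : Fin k → E, f (∑ i, {x i}) ∂Measure.pi (fun _ => π) := lintegral_map_le _ _
      _ ≤ ∫⁻ x : Fin k → E, ENNReal.ofReal (∏ i, φ (x i)) ∂Measure.pi (fun _ => π) :=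
        lintegral_mono fun x => hf k x
      _ = _ := lintegral_ofReal_prod_pi hφ hφ0 k
  calc ∫⁻ g, f g ∂poissonLaw π
      = ENNReal.ofReal (Real.exp (-(π univ).toReal)) * ∑' k : ℕ, ((Nat.factorial k : ℝ≥0∞))⁻¹ *
          ∫⁻ g, f g ∂Measure.map (fun x : Fin k → E => ∑ i, ({x i} : Multiset E))
            (Measure.pi fun _ => π) := by
        simp only [poissonLaw, lintegral_smul_measure, lintegral_sum_measure, smul_eq_mul]
    _ ≤ ENNReal.ofReal (Real.exp (-(π univ).toReal)) * ∑' k : ℕ, ((Nat.factorial k : ℝ≥0∞))⁻¹ *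
          ENNReal.ofReal ((∫ y, φ y ∂π) ^ k) := by
        gcongr with k
        exact hterm k
    _ = ENNReal.ofReal (Real.exp (∫ y, φ y ∂π - (π univ).toReal)) := by
        rw [tsum_inv_factorial_mul_ofReal_pow (integral_nonneg hφ0),
          ← ENNReal.ofReal_mul (Real.exp_nonneg _), ← Real.exp_add, neg_add_eq_sub]

lemma integrable_exp_neg_of_nonneg {τ : E → ℝ} (hτm : Measurable τ) (hτ0 : ∀ m, 0 ≤ τ m) :
    Integrable (fun y => Real.exp (-τ y)) π :=
  .of_bound (Real.measurable_exp.comp hτm.neg).aestronglyMeasurable 1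
    (.of_forall fun y => by simpa [abs_of_pos (Real.exp_pos _)] using hτ0 y)

lemma lintegral_exp_neg_gInt_poissonLaw_le {τ : E → ℝ} (hτm : Measurable τ)
    (hτ0 : ∀ m, 0 ≤ τ m) :
    ∫⁻ g, ENNReal.ofReal (Real.exp (-gInt g τ)) ∂poissonLaw π ≤
      ENNReal.ofReal (Real.exp (-∫ y, (1 - Real.exp (-τ y)) ∂π)) := by
  have hφ := integrable_exp_neg_of_nonneg (π := π) hτm hτ0
  have hexp : ∫ y, (1 - Real.exp (-τ y)) ∂π = (π univ).toReal - ∫ y, Real.exp (-τ y) ∂π := by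
    rw [integral_sub (integrable_const 1) hφ, integral_const, smul_eq_mul, mul_one,
      measureReal_def]
  rw [hexp, neg_sub]
  refine lintegral_poissonLaw_le_of_le_prod hφ (fun y => (Real.exp_pos _).le) fun k x => ?_
  rw [gInt_sum_singleton, ← Finset.sum_neg_distrib, Real.exp_sum]

lemma Fcost_le {S : Multiset E → ℝ} {ξ : ℝ} (hξ : 0 ≤ ξ) {τ : E → ℝ} (hτm : Measurable τ)
    (hτ0 : ∀ m, 0 ≤ τ m)
    (hupp : ∀ (g : Multiset E) (m' : E),
      S (g + {m'}) - S g ≤ ξ * (1 - Real.exp (-τ m')) * Real.exp (-(gInt g τ)))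
    (x : E) :
    Fcost S π x ≤ ξ * (1 - Real.exp (-τ x)) * Real.exp (-∫ y, (1 - Real.exp (-τ y)) ∂π) := by
  have hc : 0 ≤ ξ * (1 - Real.exp (-τ x)) :=
    mul_nonneg hξ (sub_nonneg.mpr (Real.exp_le_one_iff.mpr (neg_nonpos.mpr (hτ0 x))))
  refine (integral_le_toReal_lintegral_ofReal _).trans
    (ENNReal.toReal_le_of_le_ofReal (by positivity) ?_)
  calc ∫⁻ g, ENNReal.ofReal (S (g + {x}) - S g) ∂poissonLaw π
      ≤ ∫⁻ g, ENNReal.ofReal (ξ * (1 - Real.exp (-τ x))) *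
          ENNReal.ofReal (Real.exp (-gInt g τ)) ∂poissonLaw π :=
        lintegral_mono fun g => (ENNReal.ofReal_le_ofReal (hupp g x)).trans_eq
          (ENNReal.ofReal_mul hc)
    _ = ENNReal.ofReal (ξ * (1 - Real.exp (-τ x))) *
          ∫⁻ g, ENNReal.ofReal (Real.exp (-gInt g τ)) ∂poissonLaw π :=
        lintegral_const_mul' _ _ ENNReal.ofReal_ne_top
    _ ≤ ENNReal.ofReal (ξ * (1 - Real.exp (-τ x))) *
          ENNReal.ofReal (Real.exp (-∫ y, (1 - Real.exp (-τ y)) ∂π)) := by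
        gcongr
        exact lintegral_exp_neg_gInt_poissonLaw_le hτm hτ0
    _ = _ := (ENNReal.ofReal_mul hc).symm

lemma Dop_univ_le {S : Multiset E → ℝ} {ξ : ℝ} (hξ : 0 ≤ ξ) {τ : E → ℝ} (hτm : Measurable τ)
    (hτ0 : ∀ m, 0 ≤ τ m)
    (hupp : ∀ (g : Multiset E) (m' : E),
      S (g + {m'}) - S g ≤ ξ * (1 - Real.exp (-τ m')) * Real.exp (-(gInt g τ))) :
    Dop S π univ ≤ ENNReal.ofReal (ξ * Real.exp (-1)) := by
  set u := ∫ y, (1 - Real.exp (-τ y)) ∂π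
  have hc : 0 ≤ ξ * Real.exp (-u) := by positivity
  have hu : ∫⁻ y, ENNReal.ofReal (1 - Real.exp (-τ y)) ∂π = ENNReal.ofReal u :=
    (ofReal_integral_eq_lintegral_ofReal
      ((integrable_const 1).sub (integrable_exp_neg_of_nonneg hτm hτ0))
      (.of_forall fun y => sub_nonneg.mpr (Real.exp_le_one_iff.mpr (neg_nonpos.mpr (hτ0 y))))).symm
  calc Dop S π univ = ∫⁻ y, ENNReal.ofReal (Fcost S π y) ∂π := by
        rw [Dop, withDensity_apply _ MeasurableSet.univ, Measure.restrict_univ]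
    _ ≤ ∫⁻ y, ENNReal.ofReal (ξ * Real.exp (-u)) * ENNReal.ofReal (1 - Real.exp (-τ y)) ∂π :=
        lintegral_mono fun y => by
          rw [← ENNReal.ofReal_mul hc]
          exact ENNReal.ofReal_le_ofReal ((Fcost_le hξ hτm hτ0 hupp y).trans_eq (by ring))
    _ = ENNReal.ofReal (ξ * (u * Real.exp (-u))) := by
        rw [lintegral_const_mul' _ _ ENNReal.ofReal_ne_top, hu, ← ENNReal.ofReal_mul hc]
        ring_nf
    _ ≤ ENNReal.ofReal (ξ * Real.exp (-1)) := by
        gcongr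
        exact Real.mul_exp_neg_le_exp_neg_one u

end PoissonLaw

lemma IsSolution.add_mul_sub_le_measure_univ {E : Type*} [MetricSpace E] [MeasurableSpace E]
    {S : Multiset E → ℝ} {ν ρ₀ : Measure E} {ρ : ℝ → Measure E} (hsol : IsSolution S ν ρ₀ ρ)
    {c : ℝ} (hD : ∀ s, (Dop S (ρ s) univ).toReal ≤ c) {t : ℝ} (ht : 0 ≤ t) :
    (ρ₀ univ).toReal + t * ((ν univ).toReal - c) ≤ (ρ t univ).toReal := by
  have hloss : ∫ s in (0:ℝ)..t, (Dop S (ρ s) univ).toReal ≤ c * t :=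
    calc _ ≤ ‖∫ s in (0:ℝ)..t, (Dop S (ρ s) univ).toReal‖ := Real.le_norm_self _
      _ ≤ c * |t - 0| := intervalIntegral.norm_integral_le_of_norm_le_const fun s _ => by
          simpa only [Real.norm_of_nonneg ENNReal.toReal_nonneg] using hD s
      _ = c * t := by rw [sub_zero, abs_of_nonneg ht]
  rw [hsol.2.2.2 t ht univ MeasurableSet.univ]
  linarith

theorem diverges_of_multiplicative_upper_bound_general (S : Multiset M → ℝ)
    (ν : Measure M)
    (ξ : ℝ) (hξ : 0 < ξ) (τ : M → ℝ) (hτm : Measurable τ) (hτ0 : ∀ m, 0 ≤ τ m)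
    (hupp : ∀ (g : Multiset M) (m' : M),
      S (g + {m'}) - S g ≤ ξ * (1 - Real.exp (-τ m')) * Real.exp (-(gInt g τ)))
    (hν : Real.exp (-1) * ξ < (ν Set.univ).toReal)
    (ρ : ℝ → Measure M) (hsol : IsSolution S ν 0 ρ) :
    Tendsto (fun t : ℝ => ((ρ t) Set.univ).toReal) atTop atTop := by
  have hD (s : ℝ) : (Dop S (ρ s) univ).toReal ≤ ξ * Real.exp (-1) :=
    haveI := hsol.1 s
    ENNReal.toReal_le_of_le_ofReal (by positivity) (Dop_univ_le hξ.le hτm hτ0 hupp)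
  have hrate : 0 < (ν univ).toReal - ξ * Real.exp (-1) := by linarith
  refine tendsto_atTop_mono' atTop ?_ (tendsto_id.atTop_mul_const hrate)
  filter_upwards [eventually_ge_atTop 0] with t ht
  simpa using hsol.add_mul_sub_le_measure_univ hD ht

theorem diverges_of_multiplicative_upper_bound (S : Multiset M → ℝ) (K : ℝ)
    (hS : IsSelectiveCost S K) (hbdd : ∃ c : ℝ, ∀ g, S g ≤ c) (hconc : ConcaveCost S)
    (ν : Measure M) [IsFiniteMeasure ν]
    (ξ : ℝ) (hξ : 0 < ξ) (τ : M → ℝ) (hτm : Measurable τ) (hτ0 : ∀ m, 0 ≤ τ m)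
    (hupp : ∀ (g : Multiset M) (m' : M),
      S (g + {m'}) - S g ≤ ξ * (1 - Real.exp (-τ m')) * Real.exp (-(gInt g τ)))
    (hν : Real.exp (-1) * ξ < (ν Set.univ).toReal)
    (ρ : ℝ → Measure M) (hsol : IsSolution S ν 0 ρ) :
    Tendsto (fun t : ℝ => ((ρ t) Set.univ).toReal) atTop atTop :=
  diverges_of_multiplicative_upper_bound_general S ν ξ hξ τ hτm hτ0 hupp hν ρ hsol

end MSEW
end
end
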